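/- Let 𝒯 > 0 and let m₁, m₂, S : (0,𝒯) → [0,∞) satisfy m₁, S ∈ L¹((0,𝒯)), m₂ ∈ L²((0,𝒯)), and S > 0 a.e. on (0,𝒯). Let f, G : (0,𝒯) → [0,∞), with f absolutely continuous on [0,𝒯), f(0) = 0, and suppose that f′(t) + G(t) ≤ m₁(t)f(t) + m₂(t)[f(t)G(t) log⁺(S(t)/G(t))]^{1/2} for a.e. t ∈ (0,𝒯), where log⁺z = max{0, log z}, and where, at times t with G(t) = 0, the quantity G(t)log⁺(S(t)/G(t)) is interpreted as lim_{z→0⁺} z log⁺(S(t)/z) = 0. Then f ≡ 0 on [0,𝒯). -/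

import Mathlib

/-!
Write `w(y) = y (1 + log⁺ y⁻¹)` (`logModulus`) and `A = m₁ + m₂² + S ∈ L¹`. Pointwise, the
differential inequality gives `f' ≤ A w(f)`: if `G ≥ S f`, then `log⁺ (S / G) ≤ log⁺ f⁻¹` and AM-GM
absorbs the square root into `G`; if `G < S f`, then `G log⁺ (S / G) ≤ S f (1 + log⁺ f⁻¹)`.

The modulus `w` is of Osgood type: it is dominated by `ω(z) = z (z + 1) (1 + log (1 + z⁻¹))`
(`osgoodMajorant`), and `Ψ(z) = -log (1 + log (1 + z⁻¹))` (`osgoodPotential`) satisfies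
`Ψ' = 1 / ω` and `Ψ(0⁺) = -∞`. As `w(y) ≤ 2 w(z)` for `y ≤ z`, the absolutely continuous function
`Ψ(f + ε)` has derivative at most `2 |A|`, so `Ψ(f t + ε) ≤ Ψ ε + 2 ∫ |A|`; letting `ε → 0`
forces `f t = 0`.
-/

noncomputable section
open MeasureTheory Real Set Filter

/-- Absolute continuity of a real function on the interval `[a, b]`. -/
def AbsContOn (f : ℝ → ℝ) (a b : ℝ) : Prop :=
  ∀ ε > (0 : ℝ), ∃ δ > (0 : ℝ), ∀ n : ℕ, ∀ c d : Fin n → ℝ,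
    (∀ i, a ≤ c i ∧ c i ≤ d i ∧ d i ≤ b) →
    (∀ i j, i ≠ j → Disjoint (Ioo (c i) (d i)) (Ioo (c j) (d j))) →
    (∑ i, (d i - c i)) < δ → (∑ i, |f (d i) - f (c i)|) < ε

open scoped NNReal Topology

lemma mul_posLog_div_le {z Z S : ℝ} (hz : 0 ≤ z) (hzZ : z ≤ Z) :
    z * log⁺ (S / z) ≤ Z * (log⁺ (S / Z) + 1) := by
  rcases hz.eq_or_lt with rfl | hz
  · simpa using mul_nonneg hzZ (add_nonneg posLog_nonneg zero_le_one)
  have hsplit : log⁺ (S / z) ≤ log⁺ (S / Z) + log⁺ (Z / z) := by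
    rw [← div_mul_div_cancel₀ (hz.trans_le hzZ).ne']
    exact posLog_mul
  have hZz : z * log⁺ (Z / z) ≤ Z := by
    have hq : 0 ≤ Z / z := div_nonneg (hz.le.trans hzZ) hz.le
    calc z * log⁺ (Z / z) ≤ z * (Z / z) := by
          gcongr; exact max_le hq (log_le_self hq)
      _ = Z := mul_div_cancel₀ Z hz.ne'
  calc z * log⁺ (S / z) ≤ z * log⁺ (S / Z) + z * log⁺ (Z / z) := by
        rw [← mul_add]; gcongr
    _ ≤ Z * log⁺ (S / Z) + Z := by gcongr; exact posLog_nonneg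
    _ = Z * (log⁺ (S / Z) + 1) := by ring

lemma mul_sqrt_le_of_le_mul {m P a b : ℝ} (hm : 0 ≤ m) (ha : 0 ≤ a) (hb : 0 ≤ b)
    (hP : P ≤ a * b) : m * √P ≤ (m ^ 2 * a + b) / 2 := by
  have hab : m * √(a * b) = √(m ^ 2 * a) * √b := by
    rw [← sqrt_mul (by positivity), mul_assoc, sqrt_mul (sq_nonneg m), sqrt_sq hm]
  have := two_mul_le_add_sq (√(m ^ 2 * a)) (√b)
  rw [sq_sqrt (by positivity), sq_sqrt hb] at this
  calc m * √P ≤ m * √(a * b) := by gcongr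
    _ ≤ (m ^ 2 * a + b) / 2 := by linarith

def logModulus (y : ℝ) : ℝ := y * (1 + log⁺ y⁻¹)

lemma logModulus_nonneg {y : ℝ} (hy : 0 ≤ y) : 0 ≤ logModulus y :=
  mul_nonneg hy (add_nonneg zero_le_one posLog_nonneg)

lemma logModulus_le_two_mul {y z : ℝ} (hy : 0 ≤ y) (hyz : y ≤ z) :
    logModulus y ≤ 2 * logModulus z := by
  have := mul_posLog_div_le (S := 1) hy hyz
  simp only [one_div] at this
  unfold logModulus
  nlinarith [mul_nonneg (hy.trans hyz) (posLog_nonneg (x := z⁻¹))]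

lemma le_mul_logModulus_of_add_le {d F G m₁ m₂ S : ℝ} (hF : 0 ≤ F) (hG : 0 ≤ G)
    (hm₁ : 0 ≤ m₁) (hm₂ : 0 ≤ m₂) (hS : 0 ≤ S)
    (h : d + G ≤ m₁ * F + m₂ * √(F * (G * log⁺ (S / G)))) :
    d ≤ (m₁ + m₂ ^ 2 + S) * logModulus F := by
  rcases hF.eq_or_lt with rfl | hF
  · simp only [zero_mul, sqrt_zero, mul_zero, add_zero] at h
    simp only [logModulus, zero_mul, mul_zero]
    linarith
  set L := log⁺ F⁻¹
  have hL : 0 ≤ L := posLog_nonneg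
  have hw : logModulus F = F + F * L := by simp only [logModulus, L]; ring
  rcases le_or_gt (S * F) G with hlarge | hsmall
  · have hX : log⁺ (S / G) ≤ L :=
      posLog_le_posLog (by positivity) (div_le_of_le_mul₀ hG (by positivity) (by
        rw [inv_mul_eq_div, le_div_iff₀ hF]; linarith))
    have hsqrt := mul_sqrt_le_of_le_mul hm₂ (mul_nonneg hF.le posLog_nonneg) hG
      (P := F * (G * log⁺ (S / G))) (le_of_eq (by ring))
    have hFX : F * log⁺ (S / G) ≤ F * L := by gcongr
    rw [hw]
    nlinarith [mul_nonneg hm₁ (mul_nonneg hF.le hL), mul_nonneg (sq_nonneg m₂) hF.le,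
      mul_nonneg hS (add_nonneg hF.le (mul_nonneg hF.le hL)),
      mul_le_mul_of_nonneg_left hFX (sq_nonneg m₂)]
  · have hSF : 0 < S * F := lt_of_le_of_lt hG hsmall
    have hGX : G * log⁺ (S / G) ≤ S * F * (L + 1) := by
      have := mul_posLog_div_le (S := S) hG hsmall.le
      rwa [div_mul_cancel_left₀ (pos_of_mul_pos_left hSF hF.le).ne'] at this
    have hsqrt := mul_sqrt_le_of_le_mul hm₂ hF.le (by positivity : 0 ≤ F * (S * (1 + L)))
      (P := F * (G * log⁺ (S / G))) ((mul_le_mul_of_nonneg_left hGX hF.le).trans_eq (by ring))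
    rw [hw]
    nlinarith [mul_nonneg hm₁ (mul_nonneg hF.le hL), mul_nonneg hS (mul_nonneg hF.le hL),
      mul_nonneg (sq_nonneg m₂) (mul_nonneg hF.le hL)]

def osgoodPotential (z : ℝ) : ℝ := -log (1 + log (1 + z⁻¹))

def osgoodMajorant (z : ℝ) : ℝ := z * (z + 1) * (1 + log (1 + z⁻¹))

lemma one_le_one_add_log_one_add_inv {z : ℝ} (hz : 0 < z) : 1 ≤ 1 + log (1 + z⁻¹) := by
  have : 0 ≤ log (1 + z⁻¹) := log_nonneg (by have := inv_pos.2 hz; linarith)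
  linarith

lemma osgoodMajorant_pos {z : ℝ} (hz : 0 < z) : 0 < osgoodMajorant z := by
  have := one_le_one_add_log_one_add_inv hz
  unfold osgoodMajorant; positivity

lemma osgoodMajorant_inv_le {z : ℝ} (hz : 0 < z) : (osgoodMajorant z)⁻¹ ≤ z⁻¹ := by
  have := one_le_one_add_log_one_add_inv hz
  apply inv_anti₀ hz
  unfold osgoodMajorant
  nlinarith [mul_le_mul_of_nonneg_left this (by positivity : 0 ≤ z * (z + 1))]

lemma logModulus_le_osgoodMajorant {z : ℝ} (hz : 0 < z) : logModulus z ≤ osgoodMajorant z := by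
  have hlog : log⁺ z⁻¹ ≤ log (1 + z⁻¹) :=
    max_le (log_nonneg (by linarith [inv_pos.2 hz])) (log_le_log (inv_pos.2 hz) (by linarith))
  have := one_le_one_add_log_one_add_inv hz
  unfold logModulus osgoodMajorant
  calc z * (1 + log⁺ z⁻¹) ≤ z * (1 + log (1 + z⁻¹)) := by gcongr
    _ ≤ z * (z + 1) * (1 + log (1 + z⁻¹)) := by
        rw [mul_assoc]; gcongr; nlinarith

lemma hasDerivAt_osgoodPotential {z : ℝ} (hz : 0 < z) :
    HasDerivAt osgoodPotential (osgoodMajorant z)⁻¹ z := by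
  have h1 : 0 < 1 + z⁻¹ := by have := inv_pos.2 hz; linarith
  have h2 := one_le_one_add_log_one_add_inv hz
  have := ((((hasDerivAt_inv hz.ne').const_add 1).log h1.ne').const_add 1).log
    (by linarith : 1 + log (1 + z⁻¹) ≠ 0) |>.neg
  refine this.congr_deriv ?_
  unfold osgoodMajorant
  field_simp

lemma monotoneOn_osgoodPotential : MonotoneOn osgoodPotential (Ioi 0) := by
  intro a ha b hb hab
  have hb : 0 < b := hb
  have := one_le_one_add_log_one_add_inv hb
  unfold osgoodPotential
  gcongr

lemma lipschitzOnWith_osgoodPotential {ε : ℝ} (hε : 0 < ε) :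
    LipschitzOnWith (Real.toNNReal ε⁻¹) osgoodPotential (Ici ε) := by
  refine (convex_Ici ε).lipschitzOnWith_of_nnnorm_hasDerivWithin_le
    (fun z hz => (hasDerivAt_osgoodPotential (hε.trans_le hz)).hasDerivWithinAt) fun z hz => ?_
  have hz0 : 0 < z := hε.trans_le hz
  rw [← NNReal.coe_le_coe, coe_nnnorm, Real.coe_toNNReal _ (inv_nonneg.2 hε.le),
    norm_of_nonneg (inv_nonneg.2 (osgoodMajorant_pos hz0).le)]
  exact (osgoodMajorant_inv_le hz0).trans (inv_anti₀ hε hz)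

lemma tendsto_osgoodPotential_nhdsGT_zero : Tendsto osgoodPotential (𝓝[>] 0) atBot := by
  unfold osgoodPotential
  refine tendsto_neg_atTop_atBot.comp (tendsto_log_atTop.comp ?_)
  refine tendsto_atTop_add_const_left _ 1 (tendsto_log_atTop.comp ?_)
  exact tendsto_atTop_add_const_left _ 1 tendsto_inv_nhdsGT_zero

theorem LipschitzOnWith.comp_absolutelyContinuousOnInterval {X Y : Type*} [PseudoMetricSpace X]
    [PseudoMetricSpace Y] {g : X → Y} {f : ℝ → X} {K : ℝ≥0} {s : Set X} {a b : ℝ}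
    (hg : LipschitzOnWith K g s) (hf : AbsolutelyContinuousOnInterval f a b)
    (hfs : MapsTo f (uIcc a b) s) : AbsolutelyContinuousOnInterval (g ∘ f) a b := by
  unfold AbsolutelyContinuousOnInterval at hf ⊢
  have hK := mul_zero (K : ℝ) ▸ hf.const_mul (K : ℝ)
  refine squeeze_zero' (Eventually.of_forall fun _ ↦ Finset.sum_nonneg fun _ _ ↦ dist_nonneg)
    ?_ hK
  filter_upwards [mem_inf_of_right (mem_principal_self
    (AbsolutelyContinuousOnInterval.disjWithin a b))] with E hE
  rw [Finset.mul_sum]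
  refine Finset.sum_le_sum fun i hi ↦ ?_
  exact lipschitzOnWith_iff_dist_le_mul.1 hg _ (hfs (hE.1 i hi).1) _ (hfs (hE.1 i hi).2)

theorem AbsContOn.absolutelyContinuousOnInterval {f : ℝ → ℝ} {a b : ℝ} (hab : a ≤ b)
    (hf : AbsContOn f a b) : AbsolutelyContinuousOnInterval f a b := by
  rw [absolutelyContinuousOnInterval_iff]
  intro ε hε
  obtain ⟨δ, hδ, hfδ⟩ := hf ε hε
  refine ⟨δ, hδ, fun ⟨n, I⟩ ⟨hmem, hdisj⟩ hlen ↦ ?_⟩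
  have key := hfδ n (fun i ↦ min (I i).1 (I i).2) (fun i ↦ max (I i).1 (I i).2)
    (fun i ↦ ?_) (fun i j hij ↦ ?_) ?_
  · convert key using 1
    rw [Fin.sum_univ_eq_sum_range (fun i ↦ |f (max (I i).1 (I i).2) - f (min (I i).1 (I i).2)|)]
    refine Finset.sum_congr rfl fun i _ ↦ ?_
    rcases le_total (I i).1 (I i).2 with h | h <;> simp [h, Real.dist_eq, abs_sub_comm]
  · have := hmem i (Finset.mem_range.2 i.2)
    rw [uIcc_of_le hab] at this
    exact ⟨le_min this.1.1 this.2.1, min_le_max, max_le this.1.2 this.2.2⟩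
  · refine (hdisj (Finset.mem_range.2 i.2) (Finset.mem_range.2 j.2) ?_).mono ?_ ?_
    · exact fun h ↦ hij (Fin.ext h)
    · exact Ioo_subset_Ioc_self
    · exact Ioo_subset_Ioc_self
  · rw [Fin.sum_univ_eq_sum_range (fun i ↦ max (I i).1 (I i).2 - min (I i).1 (I i).2)]
    simpa [max_sub_min_eq_abs', Real.dist_eq] using hlen

theorem AbsolutelyContinuousOnInterval.osgoodPotential_add_le {f A : ℝ → ℝ} {a b ε : ℝ}
    (hab : a ≤ b) (hε : 0 < ε) (hf : AbsolutelyContinuousOnInterval f a b)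
    (hf0 : ∀ t ∈ Icc a b, 0 ≤ f t) (hA : IntervalIntegrable A volume a b)
    (hderiv : ∀ᵐ t ∂volume.restrict (Ioo a b), deriv f t ≤ A t * logModulus (f t)) :
    osgoodPotential (f b + ε) ≤ osgoodPotential (f a + ε) + ∫ t in a..b, 2 * |A t| := by
  set g := fun t ↦ osgoodPotential (f t + ε)
  have hg : AbsolutelyContinuousOnInterval g a b :=
    (lipschitzOnWith_osgoodPotential hε).comp_absolutelyContinuousOnInterval
      (hf.add (LipschitzWith.const ε).lipschitzOnWith.absolutelyContinuousOnInterval)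
      fun t ht ↦ by rw [uIcc_of_le hab] at ht; simpa using hf0 t ht
  have hbound : deriv g ≤ᵐ[volume.restrict (Icc a b)] fun t ↦ 2 * |A t| := by
    rw [← Measure.restrict_congr_set Ioo_ae_eq_Icc]
    filter_upwards [ae_restrict_mem measurableSet_Ioo, hderiv,
      ae_restrict_of_ae hf.ae_differentiableAt] with t ht hdt hdiff
    have ht' : t ∈ Icc a b := Ioo_subset_Icc_self ht
    have hz : 0 < f t + ε := by linarith [hf0 t ht']
    have hM := osgoodMajorant_pos hz
    have hgt : HasDerivAt (osgoodPotential ∘ fun t ↦ f t + ε)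
        ((osgoodMajorant (f t + ε))⁻¹ * deriv f t) t :=
      (hasDerivAt_osgoodPotential hz).comp t
        ((hdiff (by rwa [uIcc_of_le hab])).hasDerivAt.add_const ε)
    rw [show deriv g t = _ from hgt.deriv]
    calc (osgoodMajorant (f t + ε))⁻¹ * deriv f t
        ≤ (osgoodMajorant (f t + ε))⁻¹ * (|A t| * logModulus (f t)) := by
          gcongr
          exact hdt.trans (by gcongr; exacts [logModulus_nonneg (hf0 t ht'), le_abs_self _])
      _ ≤ (osgoodMajorant (f t + ε))⁻¹ * (|A t| * (2 * osgoodMajorant (f t + ε))) := by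
          gcongr
          exact (logModulus_le_two_mul (hf0 t ht') (le_add_of_nonneg_right hε.le)).trans
            (by gcongr; exact logModulus_le_osgoodMajorant hz)
      _ = 2 * |A t| := by field_simp
  have := intervalIntegral.integral_mono_ae_restrict hab hg.intervalIntegrable_deriv
    (hA.abs.const_mul 2) hbound
  rw [hg.integral_deriv_eq_sub] at this
  linarith

theorem AbsolutelyContinuousOnInterval.eq_zero_of_deriv_le_mul_logModulus {f A : ℝ → ℝ} {a b : ℝ}
    (hab : a ≤ b) (hf : AbsolutelyContinuousOnInterval f a b) (hf0 : ∀ t ∈ Icc a b, 0 ≤ f t)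
    (hfa : f a = 0) (hA : IntervalIntegrable A volume a b)
    (hderiv : ∀ᵐ t ∂volume.restrict (Ioo a b), deriv f t ≤ A t * logModulus (f t)) :
    f b = 0 := by
  by_contra hb
  have hpos : 0 < f b := (hf0 b ⟨hab, le_rfl⟩).lt_of_ne' hb
  set C := ∫ t in a..b, 2 * |A t|
  obtain ⟨ε, hεΨ, hε⟩ := ((tendsto_osgoodPotential_nhdsGT_zero.eventually
    (eventually_lt_atBot (osgoodPotential (f b) - C))).and self_mem_nhdsWithin).exists
  have hshift := hf.osgoodPotential_add_le hab hε hf0 hA hderiv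
  rw [hfa, zero_add] at hshift
  have := monotoneOn_osgoodPotential hpos (add_pos hpos hε) (le_add_of_nonneg_right hε.le)
  linarith

-- Lean's junk values `S / 0 = 0` and `log 0 = 0` make `G log⁺ (S / G) = 0` when `G = 0`,
-- which is the convention of the informal statement.
theorem osgood_logarithmic_uniqueness_lemma_general
    (𝒯 : ℝ) (m₁ m₂ S : ℝ → ℝ)
    (hm₁0 : ∀ t ∈ Ioo (0 : ℝ) 𝒯, 0 ≤ m₁ t) (hm₂0 : ∀ t ∈ Ioo (0 : ℝ) 𝒯, 0 ≤ m₂ t)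
    (hS0 : ∀ t ∈ Ioo (0 : ℝ) 𝒯, 0 ≤ S t)
    (hm₁ : IntegrableOn m₁ (Ioo (0 : ℝ) 𝒯))
    (hS : IntegrableOn S (Ioo (0 : ℝ) 𝒯))
    (hm₂ : Measurable m₂ ∧ IntegrableOn (fun t => m₂ t ^ 2) (Ioo (0 : ℝ) 𝒯))
    (f G : ℝ → ℝ)
    (hf0 : ∀ t ∈ Ico (0 : ℝ) 𝒯, 0 ≤ f t) (hG0 : ∀ t ∈ Ioo (0 : ℝ) 𝒯, 0 ≤ G t)
    (hfac : ∀ b ∈ Ioo (0 : ℝ) 𝒯, AbsContOn f 0 b)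
    (hfinit : f 0 = 0)
    (hineq : ∀ᵐ t ∂(volume.restrict (Ioo (0 : ℝ) 𝒯)),
      deriv f t + G t
        ≤ m₁ t * f t
          + m₂ t * Real.sqrt (f t * (G t * max 0 (Real.log (S t / G t))))) :
    ∀ t ∈ Ico (0 : ℝ) 𝒯, f t = 0 := by
  intro b hb
  rcases hb.1.eq_or_lt with rfl | hb0
  · exact hfinit
  have hsub : Ioo 0 b ⊆ Ioo 0 𝒯 := Ioo_subset_Ioo_right hb.2.le
  have hA : IntervalIntegrable (fun t ↦ m₁ t + m₂ t ^ 2 + S t) volume 0 b :=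
    (intervalIntegrable_iff_integrableOn_Ioc_of_le hb0.le).2 <|
      ((hm₁.add hm₂.2).add hS).mono_set (Ioc_subset_Ioo_right hb.2)
  refine (hfac b ⟨hb0, hb.2⟩).absolutelyContinuousOnInterval hb0.le
    |>.eq_zero_of_deriv_le_mul_logModulus hb0.le
      (fun t ht ↦ hf0 t ⟨ht.1, ht.2.trans_lt hb.2⟩) hfinit hA ?_
  filter_upwards [ae_restrict_mem measurableSet_Ioo,
    ae_restrict_of_ae_restrict_of_subset hsub hineq] with t ht hineq_t
  have ht𝒯 := hsub ht
  exact le_mul_logModulus_of_add_le (hf0 t (Ioo_subset_Ico_self ht𝒯)) (hG0 t ht𝒯)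
    (hm₁0 t ht𝒯) (hm₂0 t ht𝒯) (hS0 t ht𝒯) hineq_t

/-- **Lemma (Li–Titi).** A logarithmic (Osgood-type) uniqueness lemma: if nonnegative
functions `f, G` on `(0,𝒯)`, with `f` absolutely continuous and `f(0) = 0`, satisfy
`f' + G ≤ m₁ f + m₂ [f G log⁺(S/G)]^{1/2}` a.e. on `(0,𝒯)`, with `m₁, S ∈ L¹`,
`m₂ ∈ L²` and `S > 0` a.e., then `f ≡ 0` on `[0,𝒯)`.  (Note that in Lean `S/0 = 0`
and `log⁺ 0 = 0`, so the stated convention `G log⁺(S/G) = 0` when `G = 0` holds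
automatically.) -/
theorem osgood_logarithmic_uniqueness_lemma
    (𝒯 : ℝ) (h𝒯 : 0 < 𝒯) (m₁ m₂ S : ℝ → ℝ)
    (hm₁0 : ∀ t ∈ Ioo (0 : ℝ) 𝒯, 0 ≤ m₁ t) (hm₂0 : ∀ t ∈ Ioo (0 : ℝ) 𝒯, 0 ≤ m₂ t)
    (hS0 : ∀ t ∈ Ioo (0 : ℝ) 𝒯, 0 ≤ S t)
    (hm₁ : IntegrableOn m₁ (Ioo (0 : ℝ) 𝒯))
    (hS : IntegrableOn S (Ioo (0 : ℝ) 𝒯))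
    (hm₂ : Measurable m₂ ∧ IntegrableOn (fun t => m₂ t ^ 2) (Ioo (0 : ℝ) 𝒯))
    (hSpos : ∀ᵐ t ∂(volume.restrict (Ioo (0 : ℝ) 𝒯)), 0 < S t)
    (f G : ℝ → ℝ)
    (hf0 : ∀ t ∈ Ico (0 : ℝ) 𝒯, 0 ≤ f t) (hG0 : ∀ t ∈ Ioo (0 : ℝ) 𝒯, 0 ≤ G t)
    (hfac : ∀ b ∈ Ioo (0 : ℝ) 𝒯, AbsContOn f 0 b)
    (hfinit : f 0 = 0)
    (hineq : ∀ᵐ t ∂(volume.restrict (Ioo (0 : ℝ) 𝒯)),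
      deriv f t + G t
        ≤ m₁ t * f t
          + m₂ t * Real.sqrt (f t * (G t * max 0 (Real.log (S t / G t))))) :
    ∀ t ∈ Ico (0 : ℝ) 𝒯, f t = 0 :=
  osgood_logarithmic_uniqueness_lemma_general 𝒯 m₁ m₂ S hm₁0 hm₂0 hS0 hm₁ hS hm₂ f G hf0 hG0 hfac
    hfinit hineq
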